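/- Let N ≥ 2 be an integer and q ≥ 1. For a real sequence a = (a_k)_{k≥0}, set ‖a‖_1 = Σ_{k=0}^∞ |a_k|, ‖a‖_N = (Σ_{k=0}^∞ |a_k|^N)^{1/N}, and ‖a‖_e = (Σ_{k=0}^∞ |a_k|^q e^k)^{1/q}, and for h > 0 define μ(h) = inf{‖a‖_e : ‖a‖_1 = h, ‖a‖_N ≤ 1}. Then there exist constants c, C > 0 (depending only on N and q) such that for every h > 1: c · exp(h^{N/(N−1)}/q) / h^{1/(N−1)} ≤ μ(h) ≤ C · exp(h^{N/(N−1)}/q) / h^{1/(N−1)}. -/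

import Mathlib

open MeasureTheory Real Filter
open scoped ENNReal

noncomputable section

/-- Euclidean space `ℝ^N`. -/
abbrev Euc (N : ℕ) := EuclideanSpace ℝ (Fin N)

/-- Smooth compactly supported test functions (`C_0^∞`). -/
def TestFun (N : ℕ) (u : Euc N → ℝ) : Prop :=
  ContDiff ℝ (⊤ : ℕ∞) u ∧ HasCompactSupport u

/-- The hypotheses on the anisotropic (Finsler) norm `F`: nonnegative, convex,
`C²` away from the origin, even, positively 1-homogeneous, positive away from `0`,
with positive definite Hessian of `F²` away from `0`. -/
structure IsFinsler (N : ℕ) (F : Euc N → ℝ) : Prop where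
  nonneg : ∀ x, 0 ≤ F x
  convexOn : ConvexOn ℝ Set.univ F
  smooth : ContDiffOn ℝ 2 F {(0 : Euc N)}ᶜ
  even : ∀ x, F (-x) = F x
  homog : ∀ (t : ℝ) (x : Euc N), F (t • x) = |t| * F x
  pos : ∀ x : Euc N, x ≠ 0 → 0 < F x
  hess_posdef : ∀ x : Euc N, x ≠ 0 → ∀ v : Euc N, v ≠ 0 →
    0 < iteratedFDeriv ℝ 2 (fun y => (F y) ^ 2) x ![v, v]

/-- The polar (dual) norm `F⁰(x) = sup_{ξ ≠ 0} ⟨x, ξ⟩ / F(ξ)`. -/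
def polar (N : ℕ) (F : Euc N → ℝ) (x : Euc N) : ℝ :=
  sSup {y : ℝ | ∃ ξ : Euc N, ξ ≠ 0 ∧ y = (inner ℝ x ξ : ℝ) / F ξ}

/-- `κ_N`: the Lebesgue measure of the unit Wulff ball `{F⁰ ≤ 1}`. -/
def kappa (N : ℕ) (F : Euc N → ℝ) : ℝ :=
  (volume {x : Euc N | polar N F x ≤ 1}).toReal

/-- `λ_N = N^{N/(N-1)} κ_N^{1/(N-1)}`. -/
def lamN (N : ℕ) (F : Euc N → ℝ) : ℝ :=
  (N : ℝ) ^ ((N : ℝ) / ((N : ℝ) - 1)) * kappa N F ^ (1 / ((N : ℝ) - 1))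

/-- `ω_N`: the Lebesgue measure of the Euclidean unit ball. -/
def omegaN (N : ℕ) : ℝ := (volume (Metric.ball (0 : Euc N) 1)).toReal

/-- `α_N = N^{N/(N-1)} ω_N^{1/(N-1)}`. -/
def alphaN (N : ℕ) : ℝ :=
  (N : ℝ) ^ ((N : ℝ) / ((N : ℝ) - 1)) * omegaN N ^ (1 / ((N : ℝ) - 1))

/-- The anisotropic Dirichlet norm `‖F(∇u)‖_N = (∫ F(∇u)^N)^{1/N}`. -/
def gradNormF (N : ℕ) (F : Euc N → ℝ) (u : Euc N → ℝ) : ℝ :=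
  (∫ x : Euc N, F (gradient u x) ^ N) ^ (1 / (N : ℝ))

/-- The Euclidean Dirichlet norm `‖∇u‖_N = (∫ |∇u|^N)^{1/N}`. -/
def gradNormE (N : ℕ) (u : Euc N → ℝ) : ℝ :=
  (∫ x : Euc N, ‖gradient u x‖ ^ N) ^ (1 / (N : ℝ))

/-- The `L^q` norm `‖u‖_q = (∫ |u|^q)^{1/q}`. -/
def lqNorm (N : ℕ) (q : ℝ) (u : Euc N → ℝ) : ℝ :=
  (∫ x : Euc N, |u x| ^ q) ^ (1 / q)

/-- Membership in `D^{N,q}(ℝ^N)`, the completion of `C_0^∞(ℝ^N)` under the norm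
`‖∇u‖_N + ‖u‖_q`. -/
def MemD (N : ℕ) (q : ℝ) (u : Euc N → ℝ) : Prop :=
  ∃ φ : ℕ → Euc N → ℝ, (∀ n, TestFun N (φ n)) ∧
    Tendsto (fun n => gradNormE N (fun y => φ n y - u y)
      + lqNorm N q (fun y => φ n y - u y)) atTop (nhds 0)

/-- The truncated exponential series `Φ_{N,q,β}`. -/
def Phi (N : ℕ) (q β t : ℝ) : ℝ :=
  if 0 < β then
    ∑' j : ℕ, if q * ((N : ℝ) - 1) / (N : ℝ) * (1 - β / (N : ℝ)) < (j : ℝ)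
      then t ^ j / (Nat.factorial j : ℝ) else 0
  else
    ∑' j : ℕ, if q * ((N : ℝ) - 1) / (N : ℝ) ≤ (j : ℝ)
      then t ^ j / (Nat.factorial j : ℝ) else 0

/-- The decreasing rearrangement `u^♯(t) = sup {s ≥ 0 : |{u ≥ s}| > t}`. -/
def rearrangement (N : ℕ) (u : Euc N → ℝ) (t : ℝ) : ℝ :=
  sSup {s : ℝ | 0 ≤ s ∧ ENNReal.ofReal t < volume {x : Euc N | s ≤ u x}}

/-- The convex symmetrization `u⋆(x) = u^♯(κ_N F⁰(x)^N)`. -/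
def convexSymm (N : ℕ) (F : Euc N → ℝ) (u : Euc N → ℝ) (x : Euc N) : ℝ :=
  rearrangement N u (kappa N F * polar N F x ^ N)

/-- The Schwarz symmetrization `u*(x) = u^♯(ω_N |x|^N)`. -/
def schwarzSymm (N : ℕ) (u : Euc N → ℝ) (x : Euc N) : ℝ :=
  rearrangement N u (omegaN N * ‖x‖ ^ N)

/-- The subcritical anisotropic singular Trudinger–Moser supremum `ATMSC(N,q,λ,β)`. -/
def ATMSC (N : ℕ) (F : Euc N → ℝ) (q β lam : ℝ) : ℝ≥0∞ :=
  ⨆ u : {u : Euc N → ℝ // TestFun N u ∧ gradNormF N F u ≤ 1 ∧ lqNorm N q u ≠ 0},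
    (∫⁻ x : Euc N, ENNReal.ofReal
        (Phi N q β (lam * (1 - β / (N : ℝ)) * |u.1 x| ^ ((N : ℝ) / ((N : ℝ) - 1)))
          / polar N F x ^ β)) /
      ENNReal.ofReal (lqNorm N q u.1 ^ (q * (1 - β / (N : ℝ))))

/-- The critical anisotropic singular Trudinger–Moser supremum `ATMC_{a,b}(N,q,β)`
(with general growth constant `lam`). -/
def ATMC (N : ℕ) (F : Euc N → ℝ) (q β a b lam : ℝ) : ℝ≥0∞ :=
  ⨆ u : {u : Euc N → ℝ // TestFun N u ∧ gradNormF N F u ^ a + lqNorm N q u ^ b ≤ 1},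
    ∫⁻ x : Euc N, ENNReal.ofReal
      (Phi N q β (lam * (1 - β / (N : ℝ)) * |u.1 x| ^ ((N : ℝ) / ((N : ℝ) - 1)))
        / polar N F x ^ β)

/-- `μ(h)`: the infimum of `‖a‖_e` over sequences with `‖a‖_1 = h`, `‖a‖_N ≤ 1`. -/
def muSeq (N : ℕ) (q : ℝ) (h : ℝ) : ℝ≥0∞ :=
  ⨅ a : {a : ℕ → ℝ // Summable (fun k => |a k|) ∧ (∑' k : ℕ, |a k|) = h ∧
      Summable (fun k => |a k| ^ N) ∧ (∑' k : ℕ, |a k| ^ N) ≤ 1},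
    (∑' k : ℕ, ENNReal.ofReal (|a.1 k| ^ q * Real.exp (k : ℝ))) ^ (1 / q)

/-!
Write `p = N/(N-1)`. For the upper bound, spread the mass `h` evenly over the first
`n = ⌈h^p⌉` entries: then `‖a‖_N^N = h^N / n^(N-1) ≤ 1` and, the weights `e^k` growing
geometrically, `‖a‖_e ≤ (h/n) e^{n/q} ≤ e · e^{h^p/q} / h^{p-1}`.

For the lower bound, Hölder's inequality bounds the ℓ¹-mass of the first `n` entries by
`n^{1/p}`. With `δ = h^{1-p}` and `n = ⌊(h-δ)^p⌋` a mass `≥ δ` is left beyond index `n`, so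
some entry `a_{n+j}` is at least `δ(1-θ)θ^j` with `θ = e^{-1/q}`; the factor `θ^j` is exactly
compensated by the weight, giving `‖a‖_e ≥ (1-θ) δ e^{n/q}`. Bernoulli's inequality yields
`(h-δ)^p ≥ h^p - p`, hence `n ≥ h^p - 3`.
-/

open Finset

lemma sum_range_exp_le_exp (n : ℕ) : ∑ k ∈ range n, exp (k : ℝ) ≤ exp n := by
  induction n with
  | zero => simp
  | succ n ih =>
    rw [sum_range_succ, Nat.cast_succ, exp_add]
    have : 2 ≤ exp 1 := by linarith [add_one_le_exp (1 : ℝ)]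
    nlinarith [exp_pos (n : ℝ)]

lemma hasSum_ite_lt (f : ℕ → ℝ) (n : ℕ) :
    HasSum (fun k => if k < n then f k else 0) (∑ k ∈ range n, f k) := by
  have : HasSum (fun k => if k < n then f k else 0) (∑ k ∈ range n, if k < n then f k else 0) :=
    hasSum_sum_of_ne_finset_zero fun k hk => if_neg (by simpa using hk)
  rwa [sum_congr rfl fun k hk => if_pos (mem_range.1 hk)] at this

lemma exists_geometric_le_of_le_tsum {b : ℕ → ℝ} (hb : ∀ k, 0 ≤ b k) {θ δ : ℝ}
    (hθ0 : 0 ≤ θ) (hθ1 : θ < 1) (hδ : δ ≤ ∑' k, b k) : ∃ K, δ * (1 - θ) * θ ^ K ≤ b K := by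
  by_contra! hlt
  have hgeom : HasSum (fun k => δ * (1 - θ) * θ ^ k) δ := by
    have := (hasSum_geometric_of_lt_one hθ0 hθ1).mul_left (δ * (1 - θ))
    rwa [mul_assoc, mul_inv_cancel₀ (sub_pos.2 hθ1).ne', mul_one] at this
  have := Summable.tsum_lt_tsum_of_nonneg hb (fun k => (hlt k).le) (hlt 0) hgeom.summable
  linarith [hgeom.tsum_eq]

lemma sum_range_abs_pow_le {a : ℕ → ℝ} {N : ℕ} (hN : N ≠ 0) (ha : Summable fun k => |a k| ^ N)
    (n : ℕ) : (∑ k ∈ range n, |a k|) ^ N ≤ n ^ (N - 1) * ∑' k, |a k| ^ N := by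
  obtain ⟨M, rfl⟩ := Nat.exists_eq_add_one_of_ne_zero hN
  calc (∑ k ∈ range n, |a k|) ^ (M + 1) ≤ n ^ M * ∑ k ∈ range n, |a k| ^ (M + 1) := by
        simpa using pow_sum_le_card_mul_sum_pow (s := range n) (fun k _ => abs_nonneg (a k)) M
    _ ≤ n ^ (M + 1 - 1) * ∑' k, |a k| ^ (M + 1) := by
        rw [Nat.add_sub_cancel]
        gcongr
        exact ha.sum_le_tsum _ fun k _ => by positivity

lemma rpow_div_sub_one_pow {N : ℕ} (hN : 1 < N) {x : ℝ} (hx : 0 ≤ x) :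
    (x ^ ((N : ℝ) / ((N : ℝ) - 1))) ^ (N - 1) = x ^ N := by
  have hN' : (1 : ℝ) < N := by exact_mod_cast hN
  rw [← rpow_mul_natCast hx, ← rpow_natCast x N, Nat.cast_sub hN.le, Nat.cast_one,
    div_mul_cancel₀ _ (by linarith)]

lemma rpow_div_sub_one_eq_mul {N : ℕ} (hN : 1 < N) {x : ℝ} (hx : 0 ≤ x) :
    x ^ ((N : ℝ) / ((N : ℝ) - 1)) = x * x ^ (1 / ((N : ℝ) - 1)) := by
  have hN' : (1 : ℝ) < N := by exact_mod_cast hN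
  have hN1 : (N : ℝ) - 1 ≠ 0 := by linarith
  rw [← rpow_one_add' hx (by positivity)]
  congr 1
  field_simp
  ring

lemma rpow_sub_le_rpow_sub_rpow_one_sub {x p : ℝ} (hx : 1 ≤ x) (hp : 1 ≤ p) :
    x ^ p - p ≤ (x - x ^ (1 - p)) ^ p := by
  have hx0 : 0 < x := by linarith
  have hy : x ^ (-p) ≤ 1 := rpow_le_one_of_one_le_of_nonpos hx (by linarith)
  have hinv : x ^ p * x ^ (-p) = 1 := by rw [rpow_neg hx0.le, mul_inv_cancel₀ (by positivity)]
  have hsplit : x - x ^ (1 - p) = x * (1 + -x ^ (-p)) := by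
    rw [show 1 - p = 1 + -p by ring, rpow_add hx0, rpow_one]
    ring
  rw [hsplit, mul_rpow hx0.le (by linarith)]
  have := one_add_mul_self_le_rpow_one_add (s := -x ^ (-p)) (by linarith) hp
  nlinarith [rpow_pos_of_pos hx0 p]

lemma rpow_mul_exp_rpow_one_div {x q : ℝ} (hx : 0 ≤ x) (hq : q ≠ 0) (t : ℝ) :
    (x ^ q * exp t) ^ (1 / q) = x * exp (t / q) := by
  rw [mul_rpow (rpow_nonneg hx q) (exp_pos t).le, ← rpow_mul hx, mul_one_div_cancel hq, rpow_one,
    ← exp_mul, mul_one_div]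

/-- The weighted norm `‖a‖_e`. -/
def expWeightedNorm (q : ℝ) (a : ℕ → ℝ) : ℝ≥0∞ :=
  (∑' k : ℕ, ENNReal.ofReal (|a k| ^ q * exp (k : ℝ))) ^ (1 / q)

lemma ofReal_abs_mul_exp_le_expWeightedNorm {q : ℝ} (hq : 0 < q) (a : ℕ → ℝ) (k : ℕ) :
    ENNReal.ofReal (|a k| * exp (k / q)) ≤ expWeightedNorm q a := by
  rw [← rpow_mul_exp_rpow_one_div (abs_nonneg (a k)) hq.ne',
    ← ENNReal.ofReal_rpow_of_nonneg (by positivity) (by positivity)]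
  exact ENNReal.rpow_le_rpow (ENNReal.le_tsum k) (by positivity)

lemma expWeightedNorm_ite_lt_le {q c : ℝ} (hq : 0 < q) (hc : 0 ≤ c) (n : ℕ) :
    expWeightedNorm q (fun k => if k < n then c else 0) ≤ ENNReal.ofReal (c * exp (n / q)) := by
  have hterm : ∀ k, ENNReal.ofReal (|if k < n then c else 0| ^ q * exp (k : ℝ))
      = if k < n then ENNReal.ofReal (c ^ q * exp (k : ℝ)) else 0 := by
    intro k
    split_ifs <;> simp [abs_of_nonneg hc, zero_rpow hq.ne']
  rw [expWeightedNorm, tsum_congr hterm,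
    tsum_eq_sum (s := range n) fun k hk => if_neg (by simpa using hk),
    sum_congr rfl fun k hk => if_pos (mem_range.1 hk),
    ← ENNReal.ofReal_sum_of_nonneg fun k _ => by positivity, ← mul_sum,
    ENNReal.ofReal_rpow_of_nonneg (by positivity) (by positivity),
    ← rpow_mul_exp_rpow_one_div hc hq.ne']
  gcongr
  exact sum_range_exp_le_exp n

lemma muSeq_le_of_pow_le_pow {N : ℕ} (hN : N ≠ 0) {q h : ℝ} (hq : 0 < q) (hh : 0 ≤ h) {n : ℕ}
    (hn : 0 < n) (hhn : h ^ N ≤ (n : ℝ) ^ (N - 1)) :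
    muSeq N q h ≤ ENNReal.ofReal (h / n * exp (n / q)) := by
  set a : ℕ → ℝ := fun k => if k < n then h / n else 0
  have hn0 : (0 : ℝ) < n := by exact_mod_cast hn
  have habs : (fun k => |a k|) = fun k => if k < n then h / n else 0 := by
    funext k
    simp only [a]
    split_ifs <;> simp [abs_of_nonneg (div_nonneg hh hn0.le)]
  have habsN : (fun k => |a k| ^ N) = fun k => if k < n then (h / n) ^ N else 0 := by
    funext k
    simp only [a]
    split_ifs <;> simp [abs_of_nonneg (div_nonneg hh hn0.le), hN]
  have hsum1 := hasSum_ite_lt (fun _ => h / n) n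
  have hsumN := hasSum_ite_lt (fun _ => (h / n) ^ N) n
  rw [← habs] at hsum1
  rw [← habsN] at hsumN
  have hpow : (n : ℝ) * (h / n) ^ N = h ^ N / n ^ (N - 1) := by
    obtain ⟨M, rfl⟩ := Nat.exists_eq_add_one_of_ne_zero hN
    rw [Nat.add_sub_cancel, div_pow, pow_succ (n : ℝ)]
    field_simp [hn0.ne']
  have hnormN : ∑ _k ∈ range n, (h / n) ^ N ≤ 1 := by
    rwa [sum_const, card_range, nsmul_eq_mul, hpow, div_le_one (by positivity)]
  calc muSeq N q h ≤ expWeightedNorm q a :=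
        iInf_le_of_le ⟨a, hsum1.summable, by simp [hsum1.tsum_eq, mul_div_cancel₀ _ hn0.ne'],
          hsumN.summable, hsumN.tsum_eq ▸ hnormN⟩ le_rfl
    _ ≤ _ := expWeightedNorm_ite_lt_le hq (by positivity) n

lemma le_muSeq_of_pow_le_pow {N : ℕ} (hN : N ≠ 0) {q h δ : ℝ} (hq : 0 < q) (hδh : δ ≤ h) {n : ℕ}
    (hn : (n : ℝ) ^ (N - 1) ≤ (h - δ) ^ N) :
    ENNReal.ofReal ((1 - exp (-(1 / q))) * δ * exp (n / q)) ≤ muSeq N q h := by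
  refine le_iInf fun ⟨a, ha1, ha1h, haN, haN1⟩ => ?_
  set θ := exp (-(1 / q))
  have hθ1 : θ < 1 := exp_lt_one_iff.2 (by simpa using hq)
  have hhead : ∑ k ∈ range n, |a k| ≤ h - δ := by
    refine le_of_pow_le_pow_left₀ hN (by linarith) ?_
    calc (∑ k ∈ range n, |a k|) ^ N ≤ n ^ (N - 1) * ∑' k, |a k| ^ N :=
          sum_range_abs_pow_le hN haN n
      _ ≤ n ^ (N - 1) := mul_le_of_le_one_right (by positivity) haN1
      _ ≤ (h - δ) ^ N := hn
  have htail : δ ≤ ∑' k, |a (k + n)| := by linarith [ha1.sum_add_tsum_nat_add n]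
  obtain ⟨K, hK⟩ :=
    exists_geometric_le_of_le_tsum (fun k => abs_nonneg (a (k + n))) (exp_pos _).le hθ1 htail
  have hshift : θ ^ K * exp (((K + n : ℕ) : ℝ) / q) = exp (n / q) := by
    rw [← exp_nat_mul, ← exp_add]
    congr 1
    push_cast
    ring
  calc ENNReal.ofReal ((1 - θ) * δ * exp (n / q))
      = ENNReal.ofReal (δ * (1 - θ) * θ ^ K * exp (((K + n : ℕ) : ℝ) / q)) := by
        rw [mul_assoc _ (θ ^ K), hshift, mul_comm δ]
    _ ≤ ENNReal.ofReal (|a (K + n)| * exp (((K + n : ℕ) : ℝ) / q)) := by gcongr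
    _ ≤ expWeightedNorm q a := ofReal_abs_mul_exp_le_expWeightedNorm hq a (K + n)

lemma muSeq_upper_bound {N : ℕ} (hN : 1 < N) {q h : ℝ} (hq : 1 ≤ q) (hh : 0 < h) :
    muSeq N q h ≤ ENNReal.ofReal
      (exp 1 * exp (h ^ ((N : ℝ) / ((N : ℝ) - 1)) / q) / h ^ (1 / ((N : ℝ) - 1))) := by
  set p := (N : ℝ) / ((N : ℝ) - 1)
  set n := ⌈h ^ p⌉₊
  have hn : 0 < n := Nat.ceil_pos.2 (by positivity)
  have hpn : h ^ p ≤ n := Nat.le_ceil _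
  have hnp : (n : ℝ) < h ^ p + 1 := Nat.ceil_lt_add_one (by positivity)
  have hhn : h ^ N ≤ (n : ℝ) ^ (N - 1) := by
    rw [← rpow_div_sub_one_pow hN hh.le]
    gcongr
  refine (muSeq_le_of_pow_le_pow (by omega) (by linarith) hh.le hn hhn).trans
    (ENNReal.ofReal_le_ofReal ?_)
  have hfactor : h / n ≤ 1 / h ^ (1 / ((N : ℝ) - 1)) := by
    rw [div_le_div_iff₀ (by positivity) (by positivity), one_mul,
      ← rpow_div_sub_one_eq_mul hN hh.le]
    exact hpn
  have hexp : exp (n / q) ≤ exp 1 * exp (h ^ p / q) := by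
    rw [← exp_add, exp_le_exp, div_le_iff₀ (by positivity)]
    nlinarith [div_mul_cancel₀ (h ^ p) (by positivity : q ≠ 0)]
  calc h / n * exp (n / q) ≤ 1 / h ^ (1 / ((N : ℝ) - 1)) * (exp 1 * exp (h ^ p / q)) := by
        gcongr
    _ = _ := by ring

lemma muSeq_lower_bound {N : ℕ} (hN : 1 < N) {q h : ℝ} (hq : 1 ≤ q) (hh : 1 ≤ h) :
    ENNReal.ofReal ((1 - exp (-(1 / q))) * exp (-3) *
        exp (h ^ ((N : ℝ) / ((N : ℝ) - 1)) / q) / h ^ (1 / ((N : ℝ) - 1))) ≤ muSeq N q h := by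
  set p := (N : ℝ) / ((N : ℝ) - 1)
  have hN' : (2 : ℝ) ≤ N := by exact_mod_cast hN
  have hp1 : 1 ≤ p := by rw [le_div_iff₀ (by linarith)]; linarith
  have hp2 : p ≤ 2 := by rw [div_le_iff₀ (by linarith)]; linarith
  set δ := h ^ (1 - p)
  have hδ : δ = 1 / h ^ (1 / ((N : ℝ) - 1)) := by
    rw [one_div, ← rpow_neg (by linarith)]
    simp only [δ, p]
    congr 1
    field_simp [(by linarith : (N : ℝ) - 1 ≠ 0)]
    ring
  have hδh : δ ≤ h := (rpow_le_one_of_one_le_of_nonpos hh (by linarith)).trans hh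
  set n := ⌊(h - δ) ^ p⌋₊
  have hn : (n : ℝ) ^ (N - 1) ≤ (h - δ) ^ N := by
    rw [← rpow_div_sub_one_pow hN (by linarith)]
    gcongr
    exact Nat.floor_le (by positivity)
  have hpn : h ^ p - 3 ≤ n := by
    linarith [Nat.lt_floor_add_one ((h - δ) ^ p), rpow_sub_le_rpow_sub_rpow_one_sub hh hp1]
  refine le_trans (ENNReal.ofReal_le_ofReal ?_)
    (le_muSeq_of_pow_le_pow (by omega) (by linarith) hδh hn)
  have hθ : 0 ≤ 1 - exp (-(1 / q)) := sub_nonneg.2 (exp_le_one_iff.2 (by simp; linarith))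
  have hexp : exp (-3) * exp (h ^ p / q) ≤ exp (n / q) := by
    rw [← exp_add, exp_le_exp, le_div_iff₀ (by positivity)]
    nlinarith [div_mul_cancel₀ (h ^ p) (by positivity : q ≠ 0)]
  calc (1 - exp (-(1 / q))) * exp (-3) * exp (h ^ p / q) / h ^ (1 / ((N : ℝ) - 1))
      = (1 - exp (-(1 / q))) * δ * (exp (-3) * exp (h ^ p / q)) := by rw [hδ]; ring
    _ ≤ (1 - exp (-(1 / q))) * δ * exp (n / q) := by gcongr

/-- Lemma 2.4: for `h > 1`, `μ(h) ≍ exp(h^{N/(N-1)}/q) / h^{1/(N-1)}`. -/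
theorem statement19 (N : ℕ) (hN : 2 ≤ N) (q : ℝ) (hq : 1 ≤ q) :
    ∃ c C : ℝ, 0 < c ∧ 0 < C ∧ ∀ h : ℝ, 1 < h →
      ENNReal.ofReal
          (c * Real.exp (h ^ ((N : ℝ) / ((N : ℝ) - 1)) / q) / h ^ (1 / ((N : ℝ) - 1)))
        ≤ muSeq N q h ∧
      muSeq N q h ≤
        ENNReal.ofReal
          (C * Real.exp (h ^ ((N : ℝ) / ((N : ℝ) - 1)) / q) / h ^ (1 / ((N : ℝ) - 1))) := by
  have hθ : exp (-(1 / q)) < 1 := exp_lt_one_iff.2 (by simpa using (by linarith : 0 < q))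
  exact ⟨(1 - exp (-(1 / q))) * exp (-3), exp 1, mul_pos (sub_pos.2 hθ) (exp_pos _), exp_pos 1,
    fun h hh => ⟨muSeq_lower_bound hN hq hh.le, muSeq_upper_bound hN hq (by linarith)⟩⟩
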